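/- arXiv:1909.11789 — 2 statements merged into one kernel-verified Lean document; each statement's English description precedes it below -/
import Mathlib

section
/- For μ > 0 let e(μ) < 0 be the unique number with (μ/(2π)) ∫_T dq/(𝔢(q) - e(μ)) = 1. Then lim_{μ → +∞} e(μ)/μ = -1. -/
open Real

noncomputable def 𝔢 (q : ℝ) : ℝ := (1 - Real.cos q) ^ 2

/-- `∫_T dq/(𝔢(q) - z)`. -/
noncomputable def I (z : ℝ) : ℝ := ∫ q in (-π)..π, 1 / (𝔢 q - z)

/-- `Δ(μ; z) = 1 - (μ/(2π)) ∫_T dq/(𝔢(q) - z)`. -/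
noncomputable def Δ (μ z : ℝ) : ℝ := 1 - μ / (2 * π) * I z

/-!
Since `0 ≤ 𝔢 ≤ 4`, the integral `I z` for `z < 0` is squeezed between `2π / (4 - z)` and `2π / (-z)`.
The eigenvalue equation says `I (e μ) = 2π / μ`, so `-μ ≤ e μ ≤ 4 - μ`, and dividing by `μ` gives the limit.
-/

open Filter Topology

lemma 𝔢_nonneg (q : ℝ) : 0 ≤ 𝔢 q := sq_nonneg _

lemma 𝔢_le_four (q : ℝ) : 𝔢 q ≤ 4 := by
  have h1 := neg_one_le_cos q
  have h2 := cos_le_one q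
  unfold 𝔢
  nlinarith

lemma continuous_one_div_𝔢_sub {z : ℝ} (hz : z < 0) : Continuous fun q => 1 / (𝔢 q - z) := by
  refine continuous_const.div ((continuous_const.sub continuous_cos).pow 2 |>.sub continuous_const)
    fun q => ?_
  linarith [𝔢_nonneg q]

lemma I_le_of_neg {z : ℝ} (hz : z < 0) : I z ≤ 2 * π / -z := by
  calc I z ≤ ∫ _ in (-π)..π, 1 / -z := by
        refine intervalIntegral.integral_mono_on (by linarith [pi_pos])
          ((continuous_one_div_𝔢_sub hz).intervalIntegrable _ _) intervalIntegrable_const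
          fun q _ => one_div_le_one_div_of_le (by linarith) (by linarith [𝔢_nonneg q])
    _ = 2 * π / -z := by rw [intervalIntegral.integral_const, smul_eq_mul]; ring

lemma le_I_of_neg {z : ℝ} (hz : z < 0) : 2 * π / (4 - z) ≤ I z := by
  calc 2 * π / (4 - z) = ∫ _ in (-π)..π, 1 / (4 - z) := by
        rw [intervalIntegral.integral_const, smul_eq_mul]; ring
    _ ≤ I z := by
        refine intervalIntegral.integral_mono_on (by linarith [pi_pos]) intervalIntegrable_const
          ((continuous_one_div_𝔢_sub hz).intervalIntegrable _ _)
          fun q _ => one_div_le_one_div_of_le (by linarith [𝔢_nonneg q]) (by linarith [𝔢_le_four q])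

lemma neg_le_and_le_four_sub_of_eigenvalue {μ z : ℝ} (hμ : 0 < μ) (hz : z < 0)
    (h : μ / (2 * π) * I z = 1) : -μ ≤ z ∧ z ≤ 4 - μ := by
  have hI : I z = 2 * π / μ := by
    field_simp [pi_pos.ne'] at h ⊢
    linarith
  have hupper := I_le_of_neg hz
  have hlower := le_I_of_neg hz
  rw [hI] at hupper hlower
  have h2π : 0 < 2 * π := by positivity
  constructor
  · rw [div_le_div_iff₀ hμ (by linarith)] at hupper
    nlinarith
  · rw [div_le_div_iff₀ (by linarith) hμ] at hlower
    nlinarith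

theorem e_asymptotic_at_infty (e : ℝ → ℝ)
    (he : ∀ μ > (0 : ℝ), e μ < 0 ∧ μ / (2 * π) * I (e μ) = 1) :
    Filter.Tendsto (fun μ => e μ / μ) Filter.atTop (nhds (-1)) := by
  have hbounds : ∀ᶠ μ in atTop, -1 ≤ e μ / μ ∧ e μ / μ ≤ -1 + 4 / μ := by
    filter_upwards [eventually_gt_atTop 0] with μ hμ
    obtain ⟨hneg, heq⟩ := he μ hμ
    obtain ⟨hlow, hupp⟩ := neg_le_and_le_four_sub_of_eigenvalue hμ hneg heq
    refine ⟨by rw [le_div_iff₀ hμ]; linarith, ?_⟩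
    rw [div_le_iff₀ hμ, add_mul, div_mul_cancel₀ _ hμ.ne']
    linarith
  have hlim : Tendsto (fun μ : ℝ => -1 + 4 / μ) atTop (𝓝 (-1)) := by
    simpa using (tendsto_const_nhds (x := (-1 : ℝ))).add
      ((tendsto_const_nhds (x := (4 : ℝ))).div_atTop tendsto_id)
  exact tendsto_of_tendsto_of_tendsto_of_le_of_le' tendsto_const_nhds hlim
    (hbounds.mono fun _ h => h.1) (hbounds.mono fun _ h => h.2)
end

section
/- For μ < 0 let e(μ) > 4 solve (μ/(2π)) ∫_T dq/(𝔢(q) - e(μ)) = 1. Then lim_{μ ↗ 0} (e(μ) - 4)/μ² = 1/8. -/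
open Real

open Filter Topology

/-!
With `a = √e`, partial fractions split `1 / (𝔢 q - a²)` into multiples of
`1 / ((a ∓ 1) ± cos q)`, and `∫_T dq / (b - c cos q) = 2π / √(b² - c²)` follows from the
Poisson kernel integrating to `2π`. The eigenvalue equation becomes `μ (k₁ + k₂) = -2 a k₁ k₂`
with `k₁,₂ = √(a² ∓ 2a)`, and as `k₁² k₂² = a² (e - 4)` this gives
`(e - 4) / μ² = (k₁ + k₂)² / (4 a⁴)`. That expression is at most `1/2`, which forces `e → 4`,
and it is continuous at `a = 2`, where it equals `1/8`.
-/

lemma sub_mul_cos_pos {b c : ℝ} (hcb : |c| < b) (x : ℝ) : 0 < b - c * cos x := by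
  have : c * cos x ≤ |c| := by
    calc c * cos x ≤ |c * cos x| := le_abs_self _
      _ ≤ |c| := by rw [abs_mul]; exact mul_le_of_le_one_right (abs_nonneg c) (abs_cos_le_one x)
  linarith

lemma one_sub_two_mul_cos_add_sq_pos {s : ℝ} (hs : |s| < 1) (x : ℝ) :
    0 < 1 - 2 * s * cos x + s ^ 2 := by
  nlinarith [sub_mul_cos_pos hs x, sq_nonneg (s - cos x), sin_sq_add_cos_sq x, sq_nonneg (sin x)]

lemma hasDerivAt_poissonKernel_primitive {s : ℝ} (hs : |s| < 1) (x : ℝ) :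
    HasDerivAt (fun x => x + 2 * arctan (s * sin x / (1 - s * cos x)))
      ((1 - s ^ 2) / (1 - 2 * s * cos x + s ^ 2)) x := by
  have hden := sub_mul_cos_pos hs x
  have hquot : HasDerivAt (fun x => s * sin x / (1 - s * cos x))
      ((s * cos x * (1 - s * cos x) - s * sin x * (s * sin x)) / (1 - s * cos x) ^ 2) x := by
    refine ((hasDerivAt_sin x).const_mul s).div ?_ hden.ne'
    simpa using ((hasDerivAt_cos x).const_mul s).const_sub 1
  refine ((hasDerivAt_id x).add (hquot.arctan.const_mul 2)).congr_deriv ?_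
  have hpos := one_sub_two_mul_cos_add_sq_pos hs x
  have hsq : 1 + (s * sin x / (1 - s * cos x)) ^ 2
      = (1 - 2 * s * cos x + s ^ 2) / (1 - s * cos x) ^ 2 := by
    field_simp
    linear_combination s ^ 2 * sin_sq_add_cos_sq x
  rw [hsq]
  field_simp
  linear_combination (-2 * s ^ 2) * sin_sq_add_cos_sq x

theorem integral_poissonKernel_cos {s : ℝ} (hs : |s| < 1) :
    ∫ q in (-π)..π, (1 - s ^ 2) / (1 - 2 * s * cos q + s ^ 2) = 2 * π := by
  have hcont : Continuous fun q => (1 - s ^ 2) / (1 - 2 * s * cos q + s ^ 2) :=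
    continuous_const.div (by fun_prop) fun x => (one_sub_two_mul_cos_add_sq_pos hs x).ne'
  rw [intervalIntegral.integral_eq_sub_of_hasDerivAt
    (fun x _ => hasDerivAt_poissonKernel_primitive hs x) (hcont.intervalIntegrable _ _)]
  simp only [sin_pi, sin_neg, neg_zero, mul_zero, zero_div, arctan_zero]
  ring

theorem integral_one_div_sub_mul_cos {b c : ℝ} (hcb : |c| < b) :
    ∫ q in (-π)..π, 1 / (b - c * cos q) = 2 * π / √(b ^ 2 - c ^ 2) := by
  set k := √(b ^ 2 - c ^ 2)
  have hc2 : c ^ 2 < b ^ 2 := sq_lt_sq' (abs_lt.mp hcb).1 (abs_lt.mp hcb).2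
  have hk : 0 < k := sqrt_pos.mpr (by linarith)
  have hk2 : k ^ 2 = b ^ 2 - c ^ 2 := sq_sqrt (by linarith)
  have hbk : 0 < b + k := by linarith [abs_nonneg c]
  -- `s` is the root of `c s² - 2 b s + c = 0` inside the unit disc
  set s := c / (b + k)
  have hs : |s| < 1 := by
    rw [abs_div, abs_of_pos hbk, div_lt_one hbk]; linarith
  have hnum : 1 - s ^ 2 = 2 * k / (b + k) := by
    simp only [s]; field_simp; linear_combination -hk2
  have hden : ∀ q, 1 - 2 * s * cos q + s ^ 2 = 2 * (b - c * cos q) / (b + k) := by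
    intro q; simp only [s]; field_simp; linear_combination hk2
  have hkernel :
      ∀ q, 1 / (b - c * cos q) = k⁻¹ * ((1 - s ^ 2) / (1 - 2 * s * cos q + s ^ 2)) := by
    intro q
    have hpos := sub_mul_cos_pos hcb q
    rw [hnum, hden]
    field_simp
  simp_rw [hkernel, intervalIntegral.integral_const_mul, integral_poissonKernel_cos hs]
  ring

lemma intervalIntegrable_one_div_sub_mul_cos {b c : ℝ} (hcb : |c| < b) (x y : ℝ) :
    IntervalIntegrable (fun q => 1 / (b - c * cos q)) MeasureTheory.volume x y :=
  (continuous_const.div (by fun_prop) fun q => (sub_mul_cos_pos hcb q).ne').intervalIntegrable _ _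

lemma one_div_𝔢_sub_sq {a : ℝ} (ha : 2 < a) (q : ℝ) :
    1 / (𝔢 q - a ^ 2) =
      -(1 / (2 * a)) * (1 / ((a - 1) - (-1) * cos q) + 1 / ((a + 1) - 1 * cos q)) := by
  have hfactor : 𝔢 q - a ^ 2 = -(((a - 1) - (-1) * cos q) * ((a + 1) - 1 * cos q)) := by
    unfold 𝔢; ring
  have hsum : ((a - 1) - (-1) * cos q) + ((a + 1) - 1 * cos q) = 2 * a := by ring
  have h₁ : 0 < (a - 1) - (-1) * cos q := sub_mul_cos_pos (by norm_num; linarith) q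
  have h₂ : 0 < (a + 1) - 1 * cos q := sub_mul_cos_pos (by norm_num; linarith) q
  rw [hfactor, ← hsum]
  generalize (a - 1) - (-1) * cos q = d₁ at h₁
  generalize (a + 1) - 1 * cos q = d₂ at h₂
  field_simp
  ring

theorem I_sq {a : ℝ} (ha : 2 < a) :
    I (a ^ 2) = -(π / a) * (1 / √(a ^ 2 - 2 * a) + 1 / √(a ^ 2 + 2 * a)) := by
  have hlt₁ : |(-1 : ℝ)| < a - 1 := by norm_num; linarith
  have hlt₂ : |(1 : ℝ)| < a + 1 := by norm_num; linarith
  rw [I, intervalIntegral.integral_congr fun q _ => one_div_𝔢_sub_sq ha q,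
    intervalIntegral.integral_const_mul,
    intervalIntegral.integral_add (intervalIntegrable_one_div_sub_mul_cos hlt₁ _ _)
      (intervalIntegrable_one_div_sub_mul_cos hlt₂ _ _),
    integral_one_div_sub_mul_cos hlt₁, integral_one_div_sub_mul_cos hlt₂]
  rw [show (a - 1) ^ 2 - (-1) ^ 2 = a ^ 2 - 2 * a by ring,
    show (a + 1) ^ 2 - 1 ^ 2 = a ^ 2 + 2 * a by ring]
  ring

/-- `(e - 4) / μ²` expressed through `a = √e`. -/
noncomputable def gapRatio (a : ℝ) : ℝ :=
  (√(a ^ 2 - 2 * a) + √(a ^ 2 + 2 * a)) ^ 2 / (4 * a ^ 4)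

lemma sub_four_eq_sq_mul_gapRatio {μ E : ℝ} (hE : 4 < E) (h : μ / (2 * π) * I E = 1) :
    E - 4 = μ ^ 2 * gapRatio √E := by
  set a := √E
  have ha : 2 < a := lt_sqrt_of_sq_lt (by linarith)
  have hEa : E = a ^ 2 := (sq_sqrt (by linarith)).symm
  rw [hEa, I_sq ha] at h
  rw [hEa, gapRatio]
  set k₁ := √(a ^ 2 - 2 * a)
  set k₂ := √(a ^ 2 + 2 * a)
  have hk₁ : 0 < k₁ := sqrt_pos.mpr (by nlinarith)
  have hk₂ : 0 < k₂ := sqrt_pos.mpr (by nlinarith)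
  have hk₁sq : k₁ ^ 2 = a ^ 2 - 2 * a := sq_sqrt (by nlinarith)
  have hk₂sq : k₂ ^ 2 = a ^ 2 + 2 * a := sq_sqrt (by nlinarith)
  have hμ : μ * (k₁ + k₂) = -(2 * a * k₁ * k₂) := by
    field_simp at h
    nlinarith [pi_pos]
  rw [mul_div_assoc', eq_div_iff (by positivity)]
  linear_combination (2 * a * k₁ * k₂ - μ * (k₁ + k₂)) * hμ - 4 * a ^ 2 * k₂ ^ 2 * hk₁sq
    - 4 * a ^ 2 * (a ^ 2 - 2 * a) * hk₂sq

lemma gapRatio_le_half {a : ℝ} (ha : 2 < a) : gapRatio a ≤ 1 / 2 := by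
  have hk₁₂ : √(a ^ 2 - 2 * a) ≤ √(a ^ 2 + 2 * a) := sqrt_le_sqrt (by linarith)
  have hk₂sq : √(a ^ 2 + 2 * a) ^ 2 = a ^ 2 + 2 * a := sq_sqrt (by nlinarith)
  rw [gapRatio, div_le_iff₀ (by positivity)]
  calc (√(a ^ 2 - 2 * a) + √(a ^ 2 + 2 * a)) ^ 2 ≤ (2 * √(a ^ 2 + 2 * a)) ^ 2 := by
        gcongr
        linarith
    _ = 4 * (a ^ 2 + 2 * a) := by rw [mul_pow, hk₂sq]; norm_num
    _ ≤ 1 / 2 * (4 * a ^ 4) := by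
        have h : 0 < (a - 2) * (a * (a ^ 2 + 2 * a + 2)) := by
          have : 0 < a := by linarith
          have : 0 < a - 2 := by linarith
          positivity
        nlinarith

lemma continuousAt_gapRatio_two : ContinuousAt gapRatio 2 :=
  ContinuousAt.div (by fun_prop) (by fun_prop) (by norm_num)

lemma gapRatio_two : gapRatio 2 = 1 / 8 := by
  norm_num [gapRatio]

theorem e_asymptotic_at_zero_neg (e : ℝ → ℝ)
    (he : ∀ μ < (0 : ℝ), 4 < e μ ∧ μ / (2 * π) * I (e μ) = 1) :
    Filter.Tendsto (fun μ => (e μ - 4) / μ ^ 2)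
      (nhdsWithin 0 (Set.Iio 0)) (nhds (1 / 8)) := by
  have hgap : ∀ μ < 0, e μ - 4 = μ ^ 2 * gapRatio √(e μ) := fun μ hμ =>
    sub_four_eq_sq_mul_gapRatio (he μ hμ).1 (he μ hμ).2
  have he4 : Tendsto e (𝓝[<] 0) (𝓝 4) := by
    have hbound : Tendsto (fun μ : ℝ => 4 + μ ^ 2 / 2) (𝓝[<] 0) (𝓝 4) :=
      tendsto_nhdsWithin_of_tendsto_nhds ((by fun_prop : Continuous _).tendsto' 0 4 (by norm_num))
    refine tendsto_of_tendsto_of_tendsto_of_le_of_le' tendsto_const_nhds hbound ?_ ?_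
    · filter_upwards [self_mem_nhdsWithin] with μ hμ using (he μ hμ).1.le
    · filter_upwards [self_mem_nhdsWithin] with μ hμ
      have hle := gapRatio_le_half (lt_sqrt_of_sq_lt (by linarith [(he μ hμ).1]) : 2 < √(e μ))
      nlinarith [hgap μ hμ, sq_nonneg μ]
  have hsqrt : Tendsto (fun μ => √(e μ)) (𝓝[<] 0) (𝓝 2) := by
    simpa [show √4 = 2 by norm_num] using he4.sqrt
  refine gapRatio_two ▸ (continuousAt_gapRatio_two.tendsto.comp hsqrt).congr' ?_
  filter_upwards [self_mem_nhdsWithin] with μ hμ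
  rw [Function.comp_apply, hgap μ hμ, mul_div_cancel_left₀ _ (pow_ne_zero 2 hμ.ne)]
end
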